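/- The functions φ₀(R) = R(1 − R²/3)(1 + R²/3)^{−3/2} and θ₀(R) = (1 − 2R² + R⁴/9)(1 + R²/3)^{−3/2} satisfy φ₀''(R) + 5W(R)⁴ φ₀(R) = 0 and θ₀''(R) + 5W(R)⁴ θ₀(R) = 0 for all R > 0, and their Wronskian satisfies θ₀(R)φ₀'(R) − θ₀'(R)φ₀(R) = 1 for all R ≥ 0. Moreover φ₀(R) = −√3 + φ₀*(R) and θ₀(R) = R/√3 + θ₀*(R), where for every k ∈ ℕ₀ there are constants C_k with |∂_R^k φ₀*(R)| ≤ C_k ⟨R⟩^{−2−k} and |∂_R^k θ₀*(R)| ≤ C_k ⟨R⟩^{−1−k} for all R ≥ 0. -/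

import Mathlib

noncomputable section

open Real

/-- The Japanese bracket `⟨x⟩`. -/
def jap (x : ℝ) : ℝ := Real.sqrt (1 + x ^ 2)

def W (R : ℝ) : ℝ := (Real.sqrt (1 + R ^ 2 / 3))⁻¹

def phi0 (R : ℝ) : ℝ := R * (1 - R ^ 2 / 3) * (1 + R ^ 2 / 3) ^ (-(3 : ℝ) / 2)

def theta0 (R : ℝ) : ℝ := (1 - 2 * R ^ 2 + R ^ 4 / 9) * (1 + R ^ 2 / 3) ^ (-(3 : ℝ) / 2)

/-!
Put `v = √(3 + R²)`. Then `(1 + R²/3)^{-3/2} = 3√3 / v³` and `W⁴ = 9 / v⁴`, so `φ₀`, `θ₀` and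
their first two derivatives are polynomials in `R` over odd powers of `v`, and the two ODEs and the
Wronskian identity become polynomial identities.

For the asymptotics, `v³ - R³ = 3 (v² + vR + R²) / (v + R)` writes `φ₀ + √3` and `θ₀ - R/√3` as
finite sums of terms `c Rᵐ vⁿ (v + R)ᵖ` with `m + n + p ≤ -2`, resp. `≤ -1`. Since `v' = R / v` and
`(v + R)' = (v + R) / v`, the derivative of such a term is a sum of three terms of order one less.
On `R ≥ 0` each of `R`, `v`, `v + R` is at most a constant times `⟨R⟩`, and `v`, `v + R` are also
at least `⟨R⟩`, which handles negative exponents; so a sum of terms of order `≤ a` is `O(⟨R⟩^a)`.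
-/

namespace ZeroEnergy

def v (R : ℝ) : ℝ := √(3 + R ^ 2)

lemma v_pos (R : ℝ) : 0 < v R := sqrt_pos.2 (by positivity)

lemma v_sq (R : ℝ) : v R ^ 2 = 3 + R ^ 2 := sq_sqrt (by positivity)

lemma v_add_pos (R : ℝ) : 0 < v R + R := by nlinarith [v_pos R, v_sq R]

lemma hasDerivAt_v (R : ℝ) : HasDerivAt v (R / v R) R := by
  refine (((hasDerivAt_pow 2 R).const_add 3).sqrt (by positivity)).congr_deriv ?_
  simp only [v]
  field_simp
  norm_num

lemma one_add_sq_div_three_rpow (R : ℝ) :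
    (1 + R ^ 2 / 3) ^ (-(3 : ℝ) / 2) = 3 * √3 / v R ^ 3 := by
  have h : 1 + R ^ 2 / 3 = (v R / √3) ^ 2 := by
    rw [div_pow, v_sq, sq_sqrt (by norm_num)]; ring
  rw [h, ← rpow_natCast, ← rpow_mul (by positivity [v_pos R])]
  norm_num
  have h3 : √3 ^ 3 = 3 * √3 := by rw [pow_succ, sq_sqrt (by norm_num)]
  rw [div_pow, h3, inv_div]

lemma W_pow_four (R : ℝ) : W R ^ 4 = 9 / v R ^ 4 := by
  rw [W, inv_pow, show v R ^ 4 = (v R ^ 2) ^ 2 by ring, v_sq, show 4 = 2 * 2 from rfl, pow_mul,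
    sq_sqrt (by positivity)]
  field_simp
  ring

lemma phi0_eq (R : ℝ) : phi0 R = √3 * (3 * R - R ^ 3) / v R ^ 3 := by
  rw [phi0, one_add_sq_div_three_rpow]; ring

lemma theta0_eq (R : ℝ) : theta0 R = √3 / 3 * (9 - 18 * R ^ 2 + R ^ 4) / v R ^ 3 := by
  rw [theta0, one_add_sq_div_three_rpow]; ring

lemma hasDerivAt_div_v_pow {f : ℝ → ℝ} {f' R : ℝ} (hf : HasDerivAt f f' R) (n : ℕ) :
    HasDerivAt (fun x => f x / v x ^ n) ((f' * (3 + R ^ 2) - n * R * f R) / v R ^ (n + 2)) R := by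
  have hv := v_pos R
  refine (hf.div ((hasDerivAt_v R).pow n) (pow_ne_zero n hv.ne')).congr_deriv ?_
  rw [← v_sq R]
  rcases n with _ | n
  · simp only [pow_zero, Pi.one_apply, mul_one, CharP.cast_eq_zero, zero_tsub, zero_mul, mul_zero,
      sub_zero, one_pow, div_one, zero_add]
    field_simp
  · simp only [Nat.add_sub_cancel, Pi.pow_apply]
    field_simp
    push_cast
    ring

lemma deriv_phi0 : deriv phi0 = fun R => 3 * √3 * (3 - 5 * R ^ 2) / v R ^ 5 := by
  funext R
  have hf : HasDerivAt (fun x => √3 * (3 * x - x ^ 3)) (√3 * (3 - 3 * R ^ 2)) R :=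
    ((((hasDerivAt_id R).const_mul 3).sub (hasDerivAt_pow 3 R)).const_mul √3).congr_deriv
      (by norm_num)
  rw [funext phi0_eq, (hasDerivAt_div_v_pow hf 3).deriv]
  ring

lemma deriv_deriv_phi0 : deriv (deriv phi0) = fun R => 45 * √3 * R * (R ^ 2 - 3) / v R ^ 7 := by
  funext R
  have hf : HasDerivAt (fun x => 3 * √3 * (3 - 5 * x ^ 2)) (3 * √3 * (-10 * R)) R :=
    ((((hasDerivAt_pow 2 R).const_mul 5).const_sub 3).const_mul (3 * √3)).congr_deriv
      (by norm_num; ring)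
  rw [deriv_phi0, (hasDerivAt_div_v_pow hf 5).deriv]
  ring

lemma deriv_theta0 :
    deriv theta0 = fun R => √3 / 3 * (R ^ 5 + 30 * R ^ 3 - 135 * R) / v R ^ 5 := by
  funext R
  have hf : HasDerivAt (fun x => √3 / 3 * (9 - 18 * x ^ 2 + x ^ 4))
      (√3 / 3 * (-36 * R + 4 * R ^ 3)) R :=
    (((((hasDerivAt_pow 2 R).const_mul 18).const_sub 9).add
      (hasDerivAt_pow 4 R)).const_mul (√3 / 3)).congr_deriv (by norm_num; ring)
  rw [funext theta0_eq, (hasDerivAt_div_v_pow hf 3).deriv]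
  ring

lemma deriv_deriv_theta0 :
    deriv (deriv theta0) = fun R => -15 * √3 * (R ^ 4 - 18 * R ^ 2 + 9) / v R ^ 7 := by
  funext R
  have hf : HasDerivAt (fun x => √3 / 3 * (x ^ 5 + 30 * x ^ 3 - 135 * x))
      (√3 / 3 * (5 * R ^ 4 + 90 * R ^ 2 - 135)) R :=
    ((((hasDerivAt_pow 5 R).add ((hasDerivAt_pow 3 R).const_mul 30)).sub
      ((hasDerivAt_id R).const_mul 135)).const_mul (√3 / 3)).congr_deriv (by norm_num; ring)
  rw [deriv_theta0, (hasDerivAt_div_v_pow hf 5).deriv]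
  ring

theorem deriv_deriv_phi0_add_mul_phi0 (R : ℝ) :
    deriv (deriv phi0) R + 5 * W R ^ 4 * phi0 R = 0 := by
  rw [deriv_deriv_phi0, W_pow_four, phi0_eq]
  field_simp [v_pos R]
  ring

theorem deriv_deriv_theta0_add_mul_theta0 (R : ℝ) :
    deriv (deriv theta0) R + 5 * W R ^ 4 * theta0 R = 0 := by
  rw [deriv_deriv_theta0, W_pow_four, theta0_eq]
  field_simp [v_pos R]
  ring

theorem wronskian_theta0_phi0 (R : ℝ) :
    theta0 R * deriv phi0 R - deriv theta0 R * phi0 R = 1 := by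
  rw [deriv_phi0, deriv_theta0, phi0_eq, theta0_eq]
  field_simp [v_pos R]
  rw [show v R ^ 8 = (v R ^ 2) ^ 4 by ring, v_sq, sq_sqrt (by norm_num), div_eq_iff (by positivity)]
  ring

def symbolTerm (c : ℝ) (m : ℕ) (n p : ℤ) (R : ℝ) : ℝ := c * R ^ m * v R ^ n * (v R + R) ^ p

lemma hasDerivAt_symbolTerm (c : ℝ) (m : ℕ) (n p : ℤ) (R : ℝ) :
    HasDerivAt (symbolTerm c m n p) (symbolTerm (c * m) (m - 1) n p R +
      symbolTerm (c * n) (m + 1) (n - 2) p R + symbolTerm (c * p) m (n - 1) p R) R := by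
  have hv := v_pos R
  have hw := v_add_pos R
  have hvn := (hasDerivAt_zpow n (v R) (.inl hv.ne')).comp R (hasDerivAt_v R)
  have hvR : HasDerivAt (fun x => v x + x) (R / v R + 1) R := (hasDerivAt_v R).add (hasDerivAt_id R)
  have hwp := (hasDerivAt_zpow p (v R + R) (.inl hw.ne')).comp (h := fun x => v x + x) R hvR
  refine ((((hasDerivAt_pow m R).const_mul c).mul hvn).mul hwp).congr_deriv ?_
  simp only [symbolTerm, Function.comp_apply, Pi.mul_apply, zpow_sub_one₀ hv.ne',
    zpow_sub_one₀ hw.ne', zpow_sub₀ hv.ne' n 2]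
  rcases m with _ | m
  · simp only [CharP.cast_eq_zero, zero_tsub, pow_zero, mul_one, mul_zero, zero_mul, zero_add]
    field_simp
    ring
  · simp only [Nat.add_sub_cancel]
    field_simp
    push_cast
    ring

lemma one_le_jap (R : ℝ) : 1 ≤ jap R := one_le_sqrt.2 (by nlinarith)

lemma jap_pos (R : ℝ) : 0 < jap R := one_pos.trans_le (one_le_jap R)

lemma jap_sq (R : ℝ) : jap R ^ 2 = 1 + R ^ 2 := sq_sqrt (by positivity)

lemma le_jap (R : ℝ) : R ≤ jap R := by nlinarith [jap_sq R, jap_pos R]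

lemma jap_le_v (R : ℝ) : jap R ≤ v R := sqrt_le_sqrt (by linarith)

lemma v_le_two_mul_jap (R : ℝ) : v R ≤ 2 * jap R := by
  nlinarith [v_sq R, jap_sq R, v_pos R, jap_pos R]

lemma zpow_le_pow_natAbs_mul_zpow {x y K : ℝ} (hx : 0 < x) (hK : 1 ≤ K) (hxy : x ≤ y)
    (hyx : y ≤ K * x) (n : ℤ) : y ^ n ≤ K ^ n.natAbs * x ^ n := by
  obtain ⟨k, rfl | rfl⟩ := n.eq_nat_or_neg
  · simpa [mul_pow] using pow_le_pow_left₀ (hx.le.trans hxy) hyx k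
  · have hyx' : y ^ (-(k : ℤ)) ≤ x ^ (-(k : ℤ)) := by
      simpa using inv_anti₀ (by positivity) (pow_le_pow_left₀ hx.le hxy k)
    exact hyx'.trans (le_mul_of_one_le_left (by positivity) (one_le_pow₀ hK))

lemma abs_symbolTerm_le (c : ℝ) (m : ℕ) (n p : ℤ) {R : ℝ} (hR : 0 ≤ R) :
    |symbolTerm c m n p R| ≤ |c| * 3 ^ n.natAbs * 3 ^ p.natAbs * jap R ^ ((m : ℝ) + n + p) := by
  have hj := jap_pos R
  have hv := v_pos R
  have hw := v_add_pos R
  have hv_le : v R ≤ 3 * jap R := by linarith [v_le_two_mul_jap R]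
  have hw_le : v R + R ≤ 3 * jap R := by linarith [v_le_two_mul_jap R, le_jap R]
  have le_hw : jap R ≤ v R + R := by linarith [jap_le_v R]
  calc |symbolTerm c m n p R| = |c| * R ^ m * v R ^ n * (v R + R) ^ p := by
        simp only [symbolTerm, abs_mul, abs_pow, abs_of_nonneg hR, abs_of_pos (zpow_pos hv n),
          abs_of_pos (zpow_pos hw p)]
    _ ≤ |c| * jap R ^ m * (3 ^ n.natAbs * jap R ^ n) * (3 ^ p.natAbs * jap R ^ p) := by
        gcongr
        · exact le_jap R
        · exact zpow_le_pow_natAbs_mul_zpow hj (by norm_num) (jap_le_v R) hv_le n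
        · exact zpow_le_pow_natAbs_mul_zpow hj (by norm_num) le_hw hw_le p
    _ = |c| * 3 ^ n.natAbs * 3 ^ p.natAbs * jap R ^ ((m : ℤ) + n + p) := by
        rw [zpow_add₀ hj.ne', zpow_add₀ hj.ne', zpow_natCast]; ring
    _ = |c| * 3 ^ n.natAbs * 3 ^ p.natAbs * jap R ^ ((m : ℝ) + n + p) := by
        rw [← rpow_intCast]; push_cast; rfl

inductive IsSymbol (a : ℝ) : (ℝ → ℝ) → Prop
  | zero : IsSymbol a 0
  | term {c : ℝ} {m : ℕ} {n p : ℤ} (h : m + n + p ≤ a) : IsSymbol a (symbolTerm c m n p)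
  | add {f g : ℝ → ℝ} : IsSymbol a f → IsSymbol a g → IsSymbol a (f + g)

namespace IsSymbol

lemma exists_hasDerivAt {a : ℝ} {f : ℝ → ℝ} (hf : IsSymbol a f) :
    ∃ g, IsSymbol (a - 1) g ∧ ∀ R, HasDerivAt f (g R) R := by
  induction hf with
  | zero => exact ⟨0, zero, fun R => hasDerivAt_const R 0⟩
  | @term c m n p h =>
    refine ⟨_, add (add ?_ (term (by push_cast; linarith))) (term (by push_cast; linarith)),
      hasDerivAt_symbolTerm c m n p⟩
    -- the `R ^ (0 - 1)` term carries the coefficient `c * 0`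
    rcases m with _ | m
    · convert (zero : IsSymbol (a - 1) 0)
      funext R
      simp [symbolTerm]
    · exact term (by push_cast at h ⊢; linarith)
  | add _ _ ihf ihg =>
    obtain ⟨f', hf', hf⟩ := ihf
    obtain ⟨g', hg', hg⟩ := ihg
    exact ⟨f' + g', add hf' hg', fun R => (hf R).add (hg R)⟩

lemma deriv {a : ℝ} {f : ℝ → ℝ} (hf : IsSymbol a f) : IsSymbol (a - 1) (deriv f) := by
  obtain ⟨g, hg, hfg⟩ := hf.exists_hasDerivAt
  rwa [show _root_.deriv f = g from funext fun R => (hfg R).deriv]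

lemma iteratedDeriv {a : ℝ} {f : ℝ → ℝ} (hf : IsSymbol a f) (k : ℕ) :
    IsSymbol (a - k) (_root_.iteratedDeriv k f) := by
  induction k with
  | zero => simpa using hf
  | succ k ih =>
    rw [iteratedDeriv_succ, Nat.cast_succ, ← sub_sub]
    exact ih.deriv

lemma exists_abs_le {a : ℝ} {f : ℝ → ℝ} (hf : IsSymbol a f) :
    ∃ C, ∀ R ≥ 0, |f R| ≤ C * jap R ^ a := by
  induction hf with
  | zero => exact ⟨0, fun R _ => by simp⟩
  | @term c m n p h =>
    refine ⟨|c| * 3 ^ n.natAbs * 3 ^ p.natAbs, fun R hR => ?_⟩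
    refine (abs_symbolTerm_le c m n p hR).trans ?_
    gcongr
    exact one_le_jap R
  | add _ _ ihf ihg =>
    obtain ⟨C, hC⟩ := ihf
    obtain ⟨D, hD⟩ := ihg
    refine ⟨C + D, fun R hR => (abs_add_le _ _).trans ?_⟩
    linarith [hC R hR, hD R hR]

end IsSymbol

lemma isSymbol_phi0_add_sqrt_three : IsSymbol (-2) (fun R => phi0 R + √3) := by
  have h : (fun R => phi0 R + √3) = symbolTerm (3 * √3) 1 (-3) 0 +
      symbolTerm (3 * √3) 0 (-1) (-1) + symbolTerm (3 * √3) 1 (-2) (-1) +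
      symbolTerm (3 * √3) 2 (-3) (-1) := by
    funext R
    have hv := v_pos R
    have hw := v_add_pos R
    simp only [Pi.add_apply, symbolTerm, phi0_eq]
    field_simp
    linear_combination (v R ^ 2 + R * v R + R ^ 2) * v_sq R
  rw [h]
  exact .add (.add (.add (.term (by norm_num)) (.term (by norm_num))) (.term (by norm_num)))
    (.term (by norm_num))

lemma isSymbol_theta0_sub : IsSymbol (-1) (fun R => theta0 R - R / √3) := by
  have h : (fun R => theta0 R - R / √3) = symbolTerm (3 * √3) 0 (-3) 0 +
      symbolTerm (-6 * √3) 2 (-3) 0 + symbolTerm (-√3) 1 (-1) (-1) +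
      symbolTerm (-√3) 2 (-2) (-1) + symbolTerm (-√3) 3 (-3) (-1) := by
    funext R
    have hv := v_pos R
    have hw := v_add_pos R
    have h3 := sq_sqrt (show (0 : ℝ) ≤ 3 by norm_num)
    simp only [Pi.add_apply, symbolTerm, theta0_eq]
    field_simp
    linear_combination (-3 * R * (v R ^ 2 + R * v R + R ^ 2)) * v_sq R +
      R * (3 * v R ^ 2 + 3 * R * v R + 3 * R ^ 2 + R ^ 3 * v R + R ^ 4) * h3
  rw [h]
  exact .add (.add (.add (.add (.term (by norm_num)) (.term (by norm_num))) (.term (by norm_num)))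
    (.term (by norm_num))) (.term (by norm_num))

end ZeroEnergy

/-- `φ₀, θ₀` form a fundamental system of `f'' + 5W⁴f = 0` with Wronskian `1`, and
they have the asymptotic expansions `φ₀ = -√3 + O(⟨R⟩^{-2})`, `θ₀ = R/√3 + O(⟨R⟩^{-1})`
with symbol-type bounds for all derivatives. -/
theorem zero_energy_fundamental_system :
    (∀ R > (0 : ℝ), deriv (deriv phi0) R + 5 * W R ^ 4 * phi0 R = 0) ∧
    (∀ R > (0 : ℝ), deriv (deriv theta0) R + 5 * W R ^ 4 * theta0 R = 0) ∧
    (∀ R ≥ (0 : ℝ), theta0 R * deriv phi0 R - deriv theta0 R * phi0 R = 1) ∧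
    (∀ k : ℕ, ∃ C : ℝ, ∀ R ≥ (0 : ℝ),
      |iteratedDeriv k (fun R' => phi0 R' + Real.sqrt 3) R|
        ≤ C * jap R ^ (-(2 : ℝ) - (k : ℝ))) ∧
    (∀ k : ℕ, ∃ C : ℝ, ∀ R ≥ (0 : ℝ),
      |iteratedDeriv k (fun R' => theta0 R' - R' / Real.sqrt 3) R|
        ≤ C * jap R ^ (-(1 : ℝ) - (k : ℝ))) := by
  open ZeroEnergy in
  exact ⟨fun R _ => deriv_deriv_phi0_add_mul_phi0 R,
    fun R _ => deriv_deriv_theta0_add_mul_theta0 R,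
    fun R _ => wronskian_theta0_phi0 R,
    fun k => (isSymbol_phi0_add_sqrt_three.iteratedDeriv k).exists_abs_le,
    fun k => (isSymbol_theta0_sub.iteratedDeriv k).exists_abs_le⟩

end
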